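/- The semidirect product $C_7 \rtimes C_9$, where the generator of $C_9$ acts on $C_7$ by $x \mapsto x^2$ (an automorphism of order 3, so the kernel of the action is the subgroup $C_3 \leq C_9$), has exactly 15 conjugacy classes. -/

import Mathlib

/-- The cyclic group `Cₙ`, written multiplicatively. -/
abbrev Cyc (n : ℕ) : Type := Multiplicative (ZMod n)

/-- A unit `u` of `ZMod n` gives the automorphism `x ↦ x ^ u` (written
multiplicatively) of the cyclic group `Cₙ`. -/
def cycAut (n : ℕ) : (ZMod n)ˣ →* MulAut (Cyc n) where
  toFun u := AddEquiv.toMultiplicative (DistribMulAction.toAddAut (ZMod n)ˣ (ZMod n) u)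
  map_one' := by ext x; simp
  map_mul' _ _ := by ext x; simp [mul_smul]

/-- The homomorphism `C_k →* G` sending the generator `1` of `C_k = ZMod k`
to a chosen element `g` with `g ^ k = 1`. -/
noncomputable def genMap {G : Type} [Group G] (k : ℕ) (g : G) (hg : g ^ k = 1) :
    Multiplicative (ZMod k) →* G :=
  AddMonoidHom.toMultiplicativeLeft
    (ZMod.lift k ⟨zmultiplesHom (Additive G) (Additive.ofMul g), by
      simpa [zmultiplesHom, ← ofMul_pow] using congrArg Additive.ofMul hg⟩)

/-- The unit `2` of `ZMod 7`. -/
def theUnit : (ZMod 7)ˣ := ZMod.unitOfCoprime 2 (by decide)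

/-- The action of `C_9` on `C_7` where the generator acts by `x ↦ x^2`. -/
noncomputable def theAct : Multiplicative (ZMod 9) →* MulAut (Cyc 7) :=
  genMap 9 (cycAut 7 theUnit)
    (by rw [← map_pow]; norm_num [show theUnit ^ 9 = 1 from by decide])

/-- The semidirect product `C_7 ⋊ C_9`, where the generator of `C_9`
acts on `C_7` by `x ↦ x^2`. -/
noncomputable abbrev C7C9 : Type := Cyc 7 ⋊[theAct] Multiplicative (ZMod 9)

/-! Write an element of `C7C9` as a pair `(x, b) ∈ ZMod 7 × ZMod 9`. Since `C₉` is abelian,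
conjugation by `(y, c)` fixes `b` and sends `x` to `y + 2ᶜx - 2ᵇy`. If `2ᵇ ≠ 1`, i.e. `3 ∤ b`,
then `1 - 2ᵇ` is a unit and the whole coset is one class: 6 classes. If `2ᵇ = 1`, then `x` moves exactly within its orbit `{0}`, `{1, 2, 4}`, `{3, 5, 6}`
under multiplication by powers of 2, which `x ↦ x³` separates: 3 classes for each of the 3 such
`b`. Hence `6 + 9 = 15`. -/

open Multiplicative

theorem ConjClasses.card_eq_card_range {α β : Type*} [Monoid α] (f : α → β)
    (hf : ∀ a b, IsConj a b ↔ f a = f b) : Nat.card (ConjClasses α) = Nat.card (Set.range f) :=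
  Nat.card_congr ((Quotient.congrRight hf).trans (Setoid.quotientKerEquivRange f))

namespace SemidirectProduct

variable {N G : Type*} [Group N] [CommGroup G] {φ : G →* MulAut N}

theorem conj_left_of_comm (c g : N ⋊[φ] G) :
    (c * g * c⁻¹).left = c.left * φ c.right g.left * (φ g.right c.left)⁻¹ := by
  have hconj : φ (c.right * g.right) ((φ c.right)⁻¹ c.left) = φ g.right c.left := by
    rw [← MulAut.mul_apply, ← map_inv, ← map_mul, mul_comm c.right, mul_inv_cancel_right]
  simp only [mul_left, inv_left, mul_right, map_inv, hconj]

theorem isConj_iff_of_comm {g g' : N ⋊[φ] G} :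
    IsConj g g' ↔ g.right = g'.right ∧
      ∃ (n : N) (h : G), g'.left = n * φ h g.left * (φ g.right n)⁻¹ := by
  rw [isConj_iff]
  constructor
  · rintro ⟨c, rfl⟩
    exact ⟨by simp [mul_comm], c.left, c.right, conj_left_of_comm c g⟩
  · rintro ⟨hright, n, h, hleft⟩
    refine ⟨⟨n, h⟩, SemidirectProduct.ext ?_ ?_⟩
    · rw [conj_left_of_comm, hleft]
    · simp [hright, mul_comm]

end SemidirectProduct

theorem genMap_apply {G : Type} [Group G] (k : ℕ) [NeZero k] (g : G) (hg : g ^ k = 1)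
    (a : Multiplicative (ZMod k)) : genMap k g hg a = g ^ (toAdd a).val := by
  have ha : a = ofAdd (((toAdd a).val : ℤ) : ZMod k) := by simp
  conv_lhs => rw [ha]
  change Additive.toMul (ZMod.lift k _ ((((toAdd a).val : ℤ)) : ZMod k)) = g ^ (toAdd a).val
  rw [ZMod.lift_coe]
  simp only [zmultiplesHom_apply, toMul_zsmul, toMul_ofMul, zpow_natCast]

namespace C7C9

theorem toAdd_theAct_apply (c : Multiplicative (ZMod 9)) (x : Cyc 7) :
    toAdd (theAct c x) = 2 ^ (toAdd c).val * toAdd x := by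
  rw [theAct, genMap_apply, ← map_pow]
  rfl

theorem two_pow_pow_three (n : ℕ) : ((2 : ZMod 7) ^ n) ^ 3 = 1 := by
  rw [← pow_mul, mul_comm, pow_mul, show (2 : ZMod 7) ^ 3 = 1 by decide, one_pow]

theorem exists_two_pow_mul_eq_iff (x x' : ZMod 7) :
    (∃ c : ZMod 9, x' = 2 ^ c.val * x) ↔ x ^ 3 = x' ^ 3 := by
  refine ⟨?_, ?_⟩
  · rintro ⟨c, rfl⟩
    rw [mul_pow, two_pow_pow_three, one_mul]
  · revert x x'
    decide

def classInvariant (x : ZMod 7) (b : ZMod 9) : ZMod 9 × ZMod 7 :=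
  (b, if (2 : ZMod 7) ^ b.val = 1 then x ^ 3 else 0)

theorem classInvariant_eq_iff {x x' : ZMod 7} {b b' : ZMod 9} :
    classInvariant x b = classInvariant x' b' ↔
      b = b' ∧ ∃ (y : ZMod 7) (c : ZMod 9), x' = y + 2 ^ c.val * x - 2 ^ b.val * y := by
  rcases eq_or_ne b b' with rfl | hne
  · simp only [classInvariant, Prod.mk.injEq, true_and]
    split_ifs with hb
    · simp only [hb, one_mul, add_sub_cancel_left, exists_const]
      exact (exists_two_pow_mul_eq_iff x x').symm
    · have : Fact (Nat.Prime 7) := ⟨by norm_num⟩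
      have hunit : (1 : ZMod 7) - 2 ^ b.val ≠ 0 := sub_ne_zero.mpr (Ne.symm hb)
      refine iff_of_true rfl ⟨(x' - x) / (1 - 2 ^ b.val), 0, ?_⟩
      rw [ZMod.val_zero, pow_zero, one_mul]
      field_simp
      ring
  · simp [classInvariant, hne]

theorem isConj_iff_classInvariant_eq {g g' : C7C9} :
    IsConj g g' ↔ classInvariant (toAdd g.left) (toAdd g.right) =
      classInvariant (toAdd g'.left) (toAdd g'.right) := by
  rw [SemidirectProduct.isConj_iff_of_comm, classInvariant_eq_iff]
  refine and_congr toAdd.injective.eq_iff.symm (exists_congr fun n => exists_congr fun c => ?_)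
  rw [← toAdd.injective.eq_iff]
  simp only [toAdd_mul, toAdd_inv, toAdd_theAct_apply, sub_eq_add_neg]
  rfl

theorem card_range_classInvariant :
    Nat.card (Set.range (Function.uncurry classInvariant)) = 15 := by
  rw [Nat.card_eq_card_toFinset, Set.toFinset_range]
  decide

end C7C9

/-- `C7C9` has exactly 15 conjugacy classes. -/
theorem C7C9_card_conjClasses : Nat.card (ConjClasses C7C9) = 15 := by
  rw [ConjClasses.card_eq_card_range _ fun _ _ => C7C9.isConj_iff_classInvariant_eq,
    ← C7C9.card_range_classInvariant]
  let e : C7C9 ≃ ZMod 7 × ZMod 9 := SemidirectProduct.equivProd.trans (toAdd.prodCongr toAdd)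
  rw [← EquivLike.range_comp _ e]
  rfl
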